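/- Let A be an m×m real symmetric positive semidefinite matrix with Moore–Penrose inverse A†, let α be a real scalar, and define the Newton–Raphson iterates A₀ = α A, A_{k+1} = 2 A_k − A_k A A_k. Then for every k ≥ 0 the spectral norm satisfies ‖A A† − A A_k‖ ≤ ‖A A† − A A₀‖^(2^k). In particular, if ‖A A† − α A²‖ < 1, then ‖A A† − A A_k‖ → 0 as k → ∞. -/

import Mathlib

open Matrix Filter

/-- The spectral norm (ℓ²-operator norm) of a real square matrix. -/
noncomputable def specNorm {m : ℕ} (M : Matrix (Fin m) (Fin m) ℝ) : ℝ :=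
  ‖Matrix.toEuclideanCLM (𝕜 := ℝ) M‖

/-- `Ad` is the Moore–Penrose inverse of `A`: the Penrose equations
`A Ad A = A`, `Ad A Ad = Ad`, `(A Ad)ᵀ = A Ad`, `(Ad A)ᵀ = Ad A`. -/
def IsMoorePenroseInv {m n : ℕ} (A : Matrix (Fin m) (Fin n) ℝ)
    (Ad : Matrix (Fin n) (Fin m) ℝ) : Prop :=
  A * Ad * A = A ∧ Ad * A * Ad = Ad ∧ (A * Ad)ᵀ = A * Ad ∧ (Ad * A)ᵀ = Ad * A

/-!
With `P = A A†`, the Penrose equations and the symmetry of `A` give `P² = P` and `P A = A P = A`,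
and every iterate satisfies `N_k P = N_k`. Under these relations the error `E_k = P - A N_k` obeys
`E_{k+1} = E_k²`, so submultiplicativity of the spectral norm gives `‖E_k‖ ≤ ‖E_0‖ ^ 2 ^ k`.
-/

section OrderedSemiring

variable {α : Type*} [Semiring α] [PartialOrder α] [IsOrderedRing α]

theorem le_pow_two_pow_of_le_sq {u : ℕ → α} (hu : ∀ k, 0 ≤ u k)
    (h : ∀ k, u (k + 1) ≤ u k ^ 2) (k : ℕ) : u k ≤ u 0 ^ 2 ^ k := by
  induction k with
  | zero => simp
  | succ k ih =>
    calc u (k + 1) ≤ u k ^ 2 := h k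
      _ ≤ (u 0 ^ 2 ^ k) ^ 2 := pow_le_pow_left₀ (hu k) ih 2
      _ = u 0 ^ 2 ^ (k + 1) := by rw [← pow_mul, pow_succ]

end OrderedSemiring

theorem tendsto_pow_two_pow_atTop_nhds_zero {r : ℝ} (h₀ : 0 ≤ r) (h₁ : r < 1) :
    Tendsto (fun k : ℕ => r ^ 2 ^ k) atTop (nhds 0) :=
  (tendsto_pow_atTop_nhds_zero_of_lt_one h₀ h₁).comp
    (tendsto_pow_atTop_atTop_of_one_lt (α := ℕ) one_lt_two)

section Ring

variable {R : Type*} [Ring R]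

def newtonStep (A N : R) : R := 2 * N - N * A * N

variable {A P N : R}

theorem newtonStep_mul_eq_of_mul_eq (hNP : N * P = N) :
    newtonStep A N * P = newtonStep A N := by
  rw [newtonStep, sub_mul, mul_assoc 2, hNP, mul_assoc (N * A), hNP]

theorem sub_mul_newtonStep_eq_mul_self (hP : P * P = P) (hPA : P * A = A) (hNP : N * P = N) :
    P - A * newtonStep A N = (P - A * N) * (P - A * N) := by
  have hPAN : P * (A * N) = A * N := by rw [← mul_assoc, hPA]
  have hANP : A * N * P = A * N := by rw [mul_assoc, hNP]
  calc P - A * newtonStep A N = P * P - P * (A * N) - A * N * P + A * N * (A * N) := by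
        rw [hP, hPAN, hANP, newtonStep]; noncomm_ring
    _ = (P - A * N) * (P - A * N) := by noncomm_ring

theorem sub_mul_iterate_succ_eq_mul_self (hP : P * P = P) (hPA : P * A = A)
    {N : ℕ → R} (h0 : N 0 * P = N 0) (hN : ∀ k, N (k + 1) = newtonStep A (N k)) (k : ℕ) :
    P - A * N (k + 1) = (P - A * N k) * (P - A * N k) := by
  have hNP : ∀ k, N k * P = N k := by
    intro k
    induction k with
    | zero => exact h0
    | succ k ih => rw [hN, newtonStep_mul_eq_of_mul_eq ih]
  rw [hN, sub_mul_newtonStep_eq_mul_self hP hPA (hNP k)]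

end Ring

namespace IsMoorePenroseInv

theorem mul_mul_self {m n : ℕ} {A : Matrix (Fin m) (Fin n) ℝ} {Ad : Matrix (Fin n) (Fin m) ℝ}
    (h : IsMoorePenroseInv A Ad) : A * Ad * (A * Ad) = A * Ad := by
  rw [← Matrix.mul_assoc, h.1]

theorem mul_mul_of_isSymm {m : ℕ} {A Ad : Matrix (Fin m) (Fin m) ℝ} (h : IsMoorePenroseInv A Ad)
    (hA : A.IsSymm) : A * (A * Ad) = A := by
  have := congrArg transpose h.1
  rwa [transpose_mul, h.2.2.1, hA.eq] at this

end IsMoorePenroseInv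

theorem specNorm_nonneg {m : ℕ} (M : Matrix (Fin m) (Fin m) ℝ) : 0 ≤ specNorm M :=
  norm_nonneg _

theorem specNorm_mul_le {m : ℕ} (M N : Matrix (Fin m) (Fin m) ℝ) :
    specNorm (M * N) ≤ specNorm M * specNorm N := by
  rw [specNorm, specNorm, specNorm, _root_.map_mul]
  exact norm_mul_le _ _

/-- In spectral norm, `‖A Ad - A N_k‖ ≤ ‖A Ad - A N_0‖ ^ (2 ^ k)` for all
`k`, and if `‖A Ad - α A²‖ < 1` then `‖A Ad - A N_k‖ → 0`. -/
theorem newton_raphson_contraction_pow {m : ℕ}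
    (A Ad : Matrix (Fin m) (Fin m) ℝ)
    (hA : A.PosSemidef)
    (hMP : IsMoorePenroseInv A Ad)
    (α : ℝ) (N : ℕ → Matrix (Fin m) (Fin m) ℝ)
    (hN0 : N 0 = α • A)
    (hNrec : ∀ k, N (k + 1) = (2 : ℝ) • N k - N k * A * N k) :
    (∀ k, specNorm (A * Ad - A * N k) ≤ specNorm (A * Ad - A * N 0) ^ (2 ^ k)) ∧
      (specNorm (A * Ad - α • (A * A)) < 1 →
        Tendsto (fun k => specNorm (A * Ad - A * N k)) atTop (nhds 0)) := by
  have hAP : A * (A * Ad) = A :=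
    hMP.mul_mul_of_isSymm (isHermitian_iff_isSymm.mp hA.1)
  have hN : ∀ k, N (k + 1) = newtonStep A (N k) := fun k => by
    rw [hNrec, newtonStep, two_smul, two_mul]
  have hN0P : N 0 * (A * Ad) = N 0 := by rw [hN0, smul_mul_assoc, hAP]
  have hsq (k : ℕ) : specNorm (A * Ad - A * N (k + 1)) ≤ specNorm (A * Ad - A * N k) ^ 2 := by
    rw [sub_mul_iterate_succ_eq_mul_self hMP.mul_mul_self hMP.1 hN0P hN, sq]
    exact specNorm_mul_le _ _
  have hbound := le_pow_two_pow_of_le_sq (u := fun k => specNorm (A * Ad - A * N k))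
    (fun _ => specNorm_nonneg _) hsq
  refine ⟨hbound, fun hlt => ?_⟩
  rw [← mul_smul_comm, ← hN0] at hlt
  exact squeeze_zero (fun _ => specNorm_nonneg _) hbound
    (tendsto_pow_two_pow_atTop_nhds_zero (specNorm_nonneg _) hlt)
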